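/- arXiv:0808.3208 — 7 statements merged into one kernel-verified Lean document; each statement's English description precedes it below -/
import Mathlib

section
/- Let d ≥ 2 and let x ≠ y be points of EuclideanSpace ℝ (Fin d), L = ‖y − x‖, u = (y − x)/L. Let n_x, n_y be unit vectors with ⟨u, n_x⟩ ≠ 0 and ⟨u, n_y⟩ ≠ 0, and set v = u − ⟨u, n_x⟩ n_x and w = u − ⟨u, n_y⟩ n_y. Then the linear map L₁₂ from the hyperplane {η : ⟨η, n_y⟩ = 0} to the hyperplane {ξ : ⟨ξ, n_x⟩ = 0} defined by L₁₂(η) = (−(η − ⟨η, n_x⟩ n_x) + ⟨w, η⟩ v)/L is a linear isomorphism (it is injective, hence bijective between these (d−1)-dimensional subspaces). -/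
open scoped RealInnerProductSpace

/-! On `n_y^⊥` one has `⟪w, η⟫ = ⟪u, η⟫`, so `L₁₂ η = -L⁻¹ π_x (η - ⟪u, η⟫ u)`. If this vanishes,
`η - ⟪u, η⟫ u` is a multiple of `n_x` orthogonal to `u`, hence zero as `⟪u, n_x⟫ ≠ 0`; then `η` is
a multiple of `u` orthogonal to `n_y`, hence zero as `⟪u, n_y⟫ ≠ 0`. An injective linear map
between the hyperplanes `n_y^⊥` and `n_x^⊥`, which have the same dimension, is bijective. -/

open Module Set

theorem LinearMap.bijOn_of_injOn_of_finrank_eq {K V W : Type*} [Field K]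
    [AddCommGroup V] [Module K V] [AddCommGroup W] [Module K W] (f : V →ₗ[K] W)
    {p : Submodule K V} {q : Submodule K W} [FiniteDimensional K p] [FiniteDimensional K q]
    (hmaps : MapsTo f p q) (hinj : InjOn f p) (hrank : finrank K p = finrank K q) :
    BijOn f p q := by
  refine ⟨hmaps, hinj, ?_⟩
  rw [← hmaps.restrict_surjective_iff]
  exact (injective_iff_surjective_of_finrank_eq_finrank hrank (f := f.restrict hmaps)).mp
    fun a b hab ↦ Subtype.ext (hinj a.2 b.2 (congrArg Subtype.val hab))

section

variable {E : Type*} [NormedAddCommGroup E] [InnerProductSpace ℝ E]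

theorem finrank_orthogonal_span_singleton_eq [FiniteDimensional ℝ E] {v w : E}
    (hv : v ≠ 0) (hw : w ≠ 0) : finrank ℝ (ℝ ∙ v)ᗮ = finrank ℝ (ℝ ∙ w)ᗮ := by
  have hv' := (ℝ ∙ v).finrank_add_finrank_orthogonal
  have hw' := (ℝ ∙ w).finrank_add_finrank_orthogonal
  rw [finrank_span_singleton hv] at hv'
  rw [finrank_span_singleton hw] at hw'
  omega

theorem inner_sub_inner_smul_self {n : E} (hn : ‖n‖ = 1) (z : E) :
    ⟪z - ⟪z, n⟫ • n, n⟫ = 0 := by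
  rw [inner_sub_left, real_inner_smul_left, real_inner_self_eq_norm_sq, hn]
  ring

/-- The paper's `L₁₂`, with `v = π_x u` and `w = π_y u` written out. -/
noncomputable def twistOperator (L : ℝ) (u nx ny : E) : E →ₗ[ℝ] E where
  toFun η := L⁻¹ • (-(η - ⟪η, nx⟫ • nx) + ⟪u - ⟪u, ny⟫ • ny, η⟫ • (u - ⟪u, nx⟫ • nx))
  map_add' a b := by
    simp only [inner_add_left, inner_add_right]
    module
  map_smul' c a := by
    simp only [real_inner_smul_left, real_inner_smul_right, RingHom.id_apply]
    module

variable {L : ℝ} {u nx ny : E}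

theorem twistOperator_apply (η : E) : twistOperator L u nx ny η =
    L⁻¹ • (-(η - ⟪η, nx⟫ • nx) + ⟪u - ⟪u, ny⟫ • ny, η⟫ • (u - ⟪u, nx⟫ • nx)) :=
  rfl

theorem inner_twistOperator_left (hnx : ‖nx‖ = 1) (η : E) :
    ⟪twistOperator L u nx ny η, nx⟫ = 0 := by
  simp only [twistOperator_apply, real_inner_smul_left, inner_add_left, inner_neg_left,
    inner_sub_inner_smul_self hnx]
  ring

theorem eq_zero_of_twistOperator_eq_zero (hL : L ≠ 0) (hu : ‖u‖ = 1)
    (hux : ⟪u, nx⟫ ≠ 0) (huy : ⟪u, ny⟫ ≠ 0) {η : E} (hη : ⟪η, ny⟫ = 0)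
    (h : twistOperator L u nx ny η = 0) : η = 0 := by
  have hw : ⟪u - ⟪u, ny⟫ • ny, η⟫ = ⟪u, η⟫ := by
    rw [inner_sub_left, real_inner_smul_left, real_inner_comm η ny, hη, mul_zero, sub_zero]
  rw [twistOperator_apply, smul_eq_zero, or_iff_right (inv_ne_zero hL), hw] at h
  set c := ⟪η, nx⟫ - ⟪u, η⟫ * ⟪u, nx⟫
  have hperp : η - ⟪u, η⟫ • u = c • nx := by
    linear_combination (norm := module) -h
  have hc : c = 0 := by
    have := congrArg (⟪u, ·⟫) hperp
    simp only [inner_sub_right, real_inner_smul_right, real_inner_self_eq_norm_sq, hu] at this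
    exact (mul_eq_zero.mp (by linarith)).resolve_right hux
  have hη_eq : η = ⟪u, η⟫ • u := by
    rwa [hc, zero_smul, sub_eq_zero] at hperp
  have hu_η : ⟪u, η⟫ = 0 := by
    have := congrArg (⟪·, ny⟫) hη_eq
    simp only [hη, real_inner_smul_left] at this
    exact (mul_eq_zero.mp this.symm).resolve_right huy
  rw [hη_eq, hu_η, zero_smul]

theorem bijOn_twistOperator [FiniteDimensional ℝ E] (hL : L ≠ 0) (hu : ‖u‖ = 1)
    (hnx : ‖nx‖ = 1) (hux : ⟪u, nx⟫ ≠ 0) (huy : ⟪u, ny⟫ ≠ 0) :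
    BijOn (twistOperator L u nx ny) (ℝ ∙ ny)ᗮ (ℝ ∙ nx)ᗮ := by
  have hne {n : E} (h : ⟪u, n⟫ ≠ 0) : n ≠ 0 := by rintro rfl; simp at h
  refine (twistOperator L u nx ny).bijOn_of_injOn_of_finrank_eq ?_ ?_
    (finrank_orthogonal_span_singleton_eq (hne huy) (hne hux))
  · exact fun η _ ↦ Submodule.mem_orthogonal_singleton_iff_inner_left.mpr
      (inner_twistOperator_left hnx η)
  · exact LinearMap.disjoint_ker_iff_injOn.mp <| LinearMap.disjoint_ker.mpr fun η hη ↦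
      eq_zero_of_twistOperator_eq_zero hL hu hux huy
        (Submodule.mem_orthogonal_singleton_iff_inner_left.mp hη)

end

theorem stmt_0_general (d : ℕ)
    (x y : EuclideanSpace ℝ (Fin d))
    (L : ℝ) (hL : L = ‖y - x‖)
    (u : EuclideanSpace ℝ (Fin d)) (hu : u = L⁻¹ • (y - x))
    (nx ny : EuclideanSpace ℝ (Fin d)) (hnx : ‖nx‖ = 1)
    (hux : ⟪u, nx⟫ ≠ 0) (huy : ⟪u, ny⟫ ≠ 0)
    (v w : EuclideanSpace ℝ (Fin d))
    (hv : v = u - ⟪u, nx⟫ • nx) (hw : w = u - ⟪u, ny⟫ • ny)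
    (L12 : EuclideanSpace ℝ (Fin d) → EuclideanSpace ℝ (Fin d))
    (hL12 : ∀ η, L12 η = L⁻¹ • (-(η - ⟪η, nx⟫ • nx) + ⟪w, η⟫ • v)) :
    Set.BijOn L12 {η | ⟪η, ny⟫ = 0} {ξ | ⟪ξ, nx⟫ = 0} := by
  have hu0 : u ≠ 0 := by rintro rfl; simp at hux
  have hyx : y - x ≠ 0 := fun h ↦ hu0 (by rw [hu, h, smul_zero])
  have hL0 : L ≠ 0 := hL ▸ norm_ne_zero_iff.mpr hyx
  have hu1 : ‖u‖ = 1 := by rw [hu, hL]; exact norm_smul_inv_norm hyx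
  have hL12_eq : L12 = twistOperator L u nx ny := funext fun η ↦ by
    rw [hL12, hv, hw, twistOperator_apply]
  have hperp (n : EuclideanSpace ℝ (Fin d)) : {z | ⟪z, n⟫ = 0} = ((ℝ ∙ n)ᗮ : Set _) :=
    Set.ext fun _ ↦ Submodule.mem_orthogonal_singleton_iff_inner_left.symm
  rw [hL12_eq, hperp, hperp]
  exact bijOn_twistOperator hL0 hu1 hnx hux huy

/-- Twist condition: the operator `L₁₂` of the billiard generating function
`L(x,y) = |x - y|` is a linear isomorphism between the tangent hyperplanes
`n_y^⊥` and `n_x^⊥`. -/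
theorem stmt_0 (d : ℕ) (hd : 2 ≤ d)
    (x y : EuclideanSpace ℝ (Fin d)) (hxy : x ≠ y)
    (L : ℝ) (hL : L = ‖y - x‖)
    (u : EuclideanSpace ℝ (Fin d)) (hu : u = L⁻¹ • (y - x))
    (nx ny : EuclideanSpace ℝ (Fin d)) (hnx : ‖nx‖ = 1) (hny : ‖ny‖ = 1)
    (hux : ⟪u, nx⟫ ≠ 0) (huy : ⟪u, ny⟫ ≠ 0)
    (v w : EuclideanSpace ℝ (Fin d))
    (hv : v = u - ⟪u, nx⟫ • nx) (hw : w = u - ⟪u, ny⟫ • ny)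
    (L12 : EuclideanSpace ℝ (Fin d) → EuclideanSpace ℝ (Fin d))
    (hL12 : ∀ η, L12 η = L⁻¹ • (-(η - ⟪η, nx⟫ • nx) + ⟪w, η⟫ • v)) :
    Set.BijOn L12 {η | ⟪η, ny⟫ = 0} {ξ | ⟪ξ, nx⟫ = 0} :=
  stmt_0_general d x y L hL u hu nx ny hnx hux huy v w hv hw L12 hL12
end

section
/- Let d ≥ 2 and let x ≠ y be points of EuclideanSpace ℝ (Fin d), L = ‖y − x‖, u = (y − x)/L. Let n_x, n_y be unit vectors with ⟨u, n_x⟩ ≠ 0 and ⟨u, n_y⟩ ≠ 0, and set v = u − ⟨u, n_x⟩ n_x and w = u − ⟨u, n_y⟩ n_y. Then the linear map L₂₁ from the hyperplane {ξ : ⟨ξ, n_x⟩ = 0} to the hyperplane {η : ⟨η, n_y⟩ = 0} defined by L₂₁(ξ) = (−(ξ − ⟨ξ, n_y⟩ n_y) + ⟨v, ξ⟩ w)/L is a linear isomorphism (it is injective, hence bijective between these (d−1)-dimensional subspaces). -/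
/-!
Up to the factor `L⁻¹`, `L₂₁ ξ = 0` says `ξ = ⟪ξ, n_y⟫ n_y + ⟪u, ξ⟫ w` for `ξ ⊥ n_x`. Pairing with the
unit vector `u` gives `⟪u, n_y⟫ (⟪ξ, n_y⟫ - ⟪u, ξ⟫ ⟪u, n_y⟫) = 0`, so `ξ` is a multiple of `u`, and
`ξ ⊥ n_x` with `⟪u, n_x⟫ ≠ 0` forces `ξ = 0`. An injective linear map between the two hyperplanes,
which have the same dimension, is bijective.
-/

open scoped RealInnerProductSpace
open Module Set

theorem LinearMap.bijOn_of_mapsTo_of_finrank_eq {K V W : Type*} [Field K] [AddCommGroup V]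
    [Module K V] [AddCommGroup W] [Module K W] {f : V →ₗ[K] W} {p : Submodule K V}
    {q : Submodule K W} [FiniteDimensional K p] [FiniteDimensional K q]
    (hmaps : MapsTo f p q) (hker : ∀ ξ ∈ p, f ξ = 0 → ξ = 0)
    (hfr : finrank K p = finrank K q) : BijOn f p q := by
  have hinj : InjOn f p := fun a ha b hb hab =>
    sub_eq_zero.mp (hker _ (p.sub_mem ha hb) (by rw [map_sub, hab, sub_self]))
  let g : p →ₗ[K] q := f.restrict hmaps
  have hg : Function.Injective g := fun a b hab =>
    Subtype.ext (hinj a.2 b.2 (congrArg Subtype.val hab))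
  refine ⟨hmaps, hinj, fun η hη => ?_⟩
  obtain ⟨ξ, hξ⟩ := (LinearMap.injective_iff_surjective_of_finrank_eq_finrank hfr).mp hg ⟨η, hη⟩
  exact ⟨ξ, ξ.2, congrArg Subtype.val hξ⟩

section

variable {𝕜 E : Type*} [RCLike 𝕜] [NormedAddCommGroup E] [InnerProductSpace 𝕜 E]
  [FiniteDimensional 𝕜 E]

theorem Submodule.finrank_orthogonal_span_singleton_eq {a b : E} (ha : a ≠ 0) (hb : b ≠ 0) :
    finrank 𝕜 (𝕜 ∙ a)ᗮ = finrank 𝕜 (𝕜 ∙ b)ᗮ := by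
  have hsum_a := (𝕜 ∙ a).finrank_add_finrank_orthogonal
  have hsum_b := (𝕜 ∙ b).finrank_add_finrank_orthogonal
  rw [finrank_span_singleton ha] at hsum_a
  rw [finrank_span_singleton hb] at hsum_b
  omega

end

section

variable {E : Type*} [NormedAddCommGroup E] [InnerProductSpace ℝ E]

theorem setOf_inner_eq_zero (n : E) : {ξ : E | ⟪ξ, n⟫ = 0} = (ℝ ∙ n)ᗮ := by
  ext ξ
  exact Submodule.mem_orthogonal_singleton_iff_inner_left.symm

/-- The paper's `L₂₁`. -/
noncomputable def twistMap (L : ℝ) (ny v w : E) : E →ₗ[ℝ] E :=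
  L⁻¹ • (-(LinearMap.id - (innerₛₗ ℝ ny).smulRight ny) + (innerₛₗ ℝ v).smulRight w)

theorem twistMap_apply (L : ℝ) (ny v w ξ : E) :
    twistMap L ny v w ξ = L⁻¹ • (-(ξ - ⟪ξ, ny⟫ • ny) + ⟪v, ξ⟫ • w) := by
  simp [twistMap, real_inner_comm]

theorem inner_twistMap_eq_zero {ny : E} (hny : ‖ny‖ = 1) (L : ℝ) (u v ξ : E) :
    ⟪twistMap L ny v (u - ⟪u, ny⟫ • ny) ξ, ny⟫ = 0 := by
  have hnn : ⟪ny, ny⟫ = 1 := by rw [real_inner_self_eq_norm_sq, hny, one_pow]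
  simp only [twistMap_apply, real_inner_smul_left, inner_add_left, inner_neg_left,
    inner_sub_left, hnn]
  ring

theorem eq_smul_of_eq_inner_smul_add_inner_smul {u ny ξ : E} (hu : ‖u‖ = 1)
    (huy : ⟪u, ny⟫ ≠ 0) (h : ξ = ⟪ξ, ny⟫ • ny + ⟪u, ξ⟫ • (u - ⟪u, ny⟫ • ny)) :
    ξ = ⟪u, ξ⟫ • u := by
  set a := ⟪ξ, ny⟫
  set c := ⟪u, ξ⟫ with hc
  set β := ⟪u, ny⟫
  have huu : ⟪u, u⟫ = 1 := by rw [real_inner_self_eq_norm_sq, hu, one_pow]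
  have hcu : c = a * β + c * (1 - β ^ 2) := by
    conv_lhs => rw [hc, h]
    simp only [inner_add_right, inner_sub_right, real_inner_smul_right, huu]
    ring
  have hac : a = c * β := by
    have : β * (a - c * β) = 0 := by linear_combination -hcu
    linarith [(mul_eq_zero.mp this).resolve_left huy]
  rw [h, hac]
  module

theorem eq_zero_of_twistMap_eq_zero {L : ℝ} {u nx ny ξ : E} (hL : L ≠ 0) (hu : ‖u‖ = 1)
    (hux : ⟪u, nx⟫ ≠ 0) (huy : ⟪u, ny⟫ ≠ 0) (hξ : ⟪ξ, nx⟫ = 0)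
    (h : twistMap L ny (u - ⟪u, nx⟫ • nx) (u - ⟪u, ny⟫ • ny) ξ = 0) : ξ = 0 := by
  have hvξ : ⟪u - ⟪u, nx⟫ • nx, ξ⟫ = ⟪u, ξ⟫ := by
    rw [inner_sub_left, real_inner_smul_left, real_inner_comm ξ nx, hξ, mul_zero, sub_zero]
  rw [twistMap_apply, smul_eq_zero, or_iff_right (inv_ne_zero hL), hvξ] at h
  have hξu : ξ = ⟪u, ξ⟫ • u := eq_smul_of_eq_inner_smul_add_inner_smul hu huy
    (by linear_combination (norm := module) -h)
  have hc : ⟪u, ξ⟫ * ⟪u, nx⟫ = 0 := by rw [← real_inner_smul_left, ← hξu, hξ]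
  rw [hξu, (mul_eq_zero.mp hc).resolve_right hux, zero_smul]

end

theorem stmt_1_general (d : ℕ)
    (x y : EuclideanSpace ℝ (Fin d))
    (L : ℝ) (hL : L = ‖y - x‖)
    (u : EuclideanSpace ℝ (Fin d)) (hu : u = L⁻¹ • (y - x))
    (nx ny : EuclideanSpace ℝ (Fin d)) (hny : ‖ny‖ = 1)
    (hux : ⟪u, nx⟫ ≠ 0) (huy : ⟪u, ny⟫ ≠ 0)
    (v w : EuclideanSpace ℝ (Fin d))
    (hv : v = u - ⟪u, nx⟫ • nx) (hw : w = u - ⟪u, ny⟫ • ny)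
    (L21 : EuclideanSpace ℝ (Fin d) → EuclideanSpace ℝ (Fin d))
    (hL21 : ∀ ξ, L21 ξ = L⁻¹ • (-(ξ - ⟪ξ, ny⟫ • ny) + ⟪v, ξ⟫ • w)) :
    Set.BijOn L21 {ξ | ⟪ξ, nx⟫ = 0} {η | ⟪η, ny⟫ = 0} := by
  have hu0 : u ≠ 0 := by rintro rfl; exact hux (inner_zero_left _)
  have hL0 : L ≠ 0 := by rintro rfl; exact hu0 (by rw [hu, inv_zero, zero_smul])
  have hu1 : ‖u‖ = 1 := by
    rw [hu, norm_smul, norm_inv, Real.norm_eq_abs, hL, abs_norm, ← hL, inv_mul_cancel₀ hL0]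
  have hnx0 : nx ≠ 0 := by rintro rfl; exact hux (inner_zero_right _)
  have hny0 : ny ≠ 0 := by rintro rfl; exact huy (inner_zero_right _)
  obtain rfl : L21 = twistMap L ny v w := funext fun ξ => (hL21 ξ).trans (twistMap_apply ..).symm
  subst hv hw
  rw [setOf_inner_eq_zero, setOf_inner_eq_zero]
  refine LinearMap.bijOn_of_mapsTo_of_finrank_eq (fun ξ _ => ?_) (fun ξ hξ => ?_)
    (Submodule.finrank_orthogonal_span_singleton_eq hnx0 hny0)
  · exact Submodule.mem_orthogonal_singleton_iff_inner_left.mpr (inner_twistMap_eq_zero hny ..)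
  · exact eq_zero_of_twistMap_eq_zero hL0 hu1 hux huy
      (Submodule.mem_orthogonal_singleton_iff_inner_left.mp hξ)

/-- Twist condition: the operator `L₂₁` of the billiard generating function
`L(x,y) = |x - y|` is a linear isomorphism between the tangent hyperplanes
`n_x^⊥` and `n_y^⊥`. -/
theorem stmt_1 (d : ℕ) (hd : 2 ≤ d)
    (x y : EuclideanSpace ℝ (Fin d)) (hxy : x ≠ y)
    (L : ℝ) (hL : L = ‖y - x‖)
    (u : EuclideanSpace ℝ (Fin d)) (hu : u = L⁻¹ • (y - x))
    (nx ny : EuclideanSpace ℝ (Fin d)) (hnx : ‖nx‖ = 1) (hny : ‖ny‖ = 1)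
    (hux : ⟪u, nx⟫ ≠ 0) (huy : ⟪u, ny⟫ ≠ 0)
    (v w : EuclideanSpace ℝ (Fin d))
    (hv : v = u - ⟪u, nx⟫ • nx) (hw : w = u - ⟪u, ny⟫ • ny)
    (L21 : EuclideanSpace ℝ (Fin d) → EuclideanSpace ℝ (Fin d))
    (hL21 : ∀ ξ, L21 ξ = L⁻¹ • (-(ξ - ⟪ξ, ny⟫ • ny) + ⟪v, ξ⟫ • w)) :
    Set.BijOn L21 {ξ | ⟪ξ, nx⟫ = 0} {η | ⟪η, ny⟫ = 0} :=
  stmt_1_general d x y L hL u hu nx ny hny hux huy v w hv hw L21 hL21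
end

section
/- Let d ≥ 2 and let x ≠ y be points of EuclideanSpace ℝ (Fin d), L = ‖y − x‖, u = (y − x)/L. Let n_x, n_y be unit vectors, and set v = u − ⟨u, n_x⟩ n_x and w = u − ⟨u, n_y⟩ n_y. Define L₁₂(η) = (−(η − ⟨η, n_x⟩ n_x) + ⟨w, η⟩ v)/L for η with ⟨η, n_y⟩ = 0, and L₂₁(ξ) = (−(ξ − ⟨ξ, n_y⟩ n_y) + ⟨v, ξ⟩ w)/L for ξ with ⟨ξ, n_x⟩ = 0. Then for every ξ with ⟨ξ, n_x⟩ = 0 and every η with ⟨η, n_y⟩ = 0 one has ⟨L₁₂(η), ξ⟩ = ⟨η, L₂₁(ξ)⟩, i.e. L₁₂ and L₂₁ are adjoint to one another. -/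
open scoped RealInnerProductSpace

section MixedHessian

variable {E : Type*} [NormedAddCommGroup E] [InnerProductSpace ℝ E]

/-- With `c = L⁻¹`, `mixedHessian c n_x v w` is the paper's `L₁₂` and `mixedHessian c n_y w v`
its `L₂₁`. -/
noncomputable def mixedHessian (c : ℝ) (n v w η : E) : E :=
  c • (-(η - ⟪η, n⟫ • n) + ⟪w, η⟫ • v)

theorem inner_sub_inner_smul_left_of_inner_eq_zero {n ξ : E} (η : E) (hξ : ⟪ξ, n⟫ = 0) :
    ⟪η - ⟪η, n⟫ • n, ξ⟫ = ⟪η, ξ⟫ := by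
  rw [inner_sub_left, real_inner_smul_left, real_inner_comm ξ n, hξ, mul_zero, sub_zero]

theorem inner_mixedHessian_left (c : ℝ) {n ξ : E} (v w η : E) (hξ : ⟪ξ, n⟫ = 0) :
    ⟪mixedHessian c n v w η, ξ⟫ = c * (-⟪η, ξ⟫ + ⟪w, η⟫ * ⟪v, ξ⟫) := by
  rw [mixedHessian, real_inner_smul_left, inner_add_left, inner_neg_left,
    inner_sub_inner_smul_left_of_inner_eq_zero η hξ, real_inner_smul_left]

theorem inner_mixedHessian_eq_inner_mixedHessian (c : ℝ) {a b ξ η : E} (v w : E)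
    (hξ : ⟪ξ, a⟫ = 0) (hη : ⟪η, b⟫ = 0) :
    ⟪mixedHessian c a v w η, ξ⟫ = ⟪η, mixedHessian c b w v ξ⟫ := by
  rw [real_inner_comm _ η, inner_mixedHessian_left c v w η hξ,
    inner_mixedHessian_left c w v ξ hη, real_inner_comm η ξ]
  ring

end MixedHessian

theorem stmt_2_general (d : ℕ)
    (L : ℝ)
    (nx ny : EuclideanSpace ℝ (Fin d))
    (v w : EuclideanSpace ℝ (Fin d))
    (L12 L21 : EuclideanSpace ℝ (Fin d) → EuclideanSpace ℝ (Fin d))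
    (hL12 : ∀ η, L12 η = L⁻¹ • (-(η - ⟪η, nx⟫ • nx) + ⟪w, η⟫ • v))
    (hL21 : ∀ ξ, L21 ξ = L⁻¹ • (-(ξ - ⟪ξ, ny⟫ • ny) + ⟪v, ξ⟫ • w)) :
    ∀ ξ η : EuclideanSpace ℝ (Fin d), ⟪ξ, nx⟫ = 0 → ⟪η, ny⟫ = 0 →
      ⟪L12 η, ξ⟫ = ⟪η, L21 ξ⟫ := by
  intro ξ η hξ hη
  rw [hL12, hL21]
  exact inner_mixedHessian_eq_inner_mixedHessian L⁻¹ v w hξ hη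

/-- The mixed second partial derivative operators `L₁₂` and `L₂₁` of the billiard
generating function `L(x,y) = |x - y|` are adjoint to one another. -/
theorem stmt_2 (d : ℕ) (hd : 2 ≤ d)
    (x y : EuclideanSpace ℝ (Fin d)) (hxy : x ≠ y)
    (L : ℝ) (hL : L = ‖y - x‖)
    (u : EuclideanSpace ℝ (Fin d)) (hu : u = L⁻¹ • (y - x))
    (nx ny : EuclideanSpace ℝ (Fin d)) (hnx : ‖nx‖ = 1) (hny : ‖ny‖ = 1)
    (v w : EuclideanSpace ℝ (Fin d))
    (hv : v = u - ⟪u, nx⟫ • nx) (hw : w = u - ⟪u, ny⟫ • ny)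
    (L12 L21 : EuclideanSpace ℝ (Fin d) → EuclideanSpace ℝ (Fin d))
    (hL12 : ∀ η, L12 η = L⁻¹ • (-(η - ⟪η, nx⟫ • nx) + ⟪w, η⟫ • v))
    (hL21 : ∀ ξ, L21 ξ = L⁻¹ • (-(ξ - ⟪ξ, ny⟫ • ny) + ⟪v, ξ⟫ • w)) :
    ∀ ξ η : EuclideanSpace ℝ (Fin d), ⟪ξ, nx⟫ = 0 → ⟪η, ny⟫ = 0 →
      ⟪L12 η, ξ⟫ = ⟪η, L21 ξ⟫ :=
  stmt_2_general d L nx ny v w L12 L21 hL12 hL21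
end

section
/- Let d ≥ 2, fix x in EuclideanSpace ℝ (Fin d) and a unit vector n_x, and let π_x(z) = z − ⟨z, n_x⟩ n_x. Then the map G(y) = π_x((x − y)/‖x − y‖), defined for y ≠ x, is differentiable at every y ≠ x, and its Fréchet derivative at y applied to a vector η equals (−π_x(η) + ⟨u, η⟩ π_x(u))/‖x − y‖, where u = (y − x)/‖x − y‖. -/
/-!
Write `G = π_x ∘ N ∘ (z ↦ x - z)` with `N w = ‖w‖⁻¹ • w`. Differentiating `N` through
`‖w‖ = √‖w‖²` gives `N'(w) η = ‖w‖⁻¹ • (η - ⟪ŵ, η⟫ • ŵ)` with `ŵ = N w`; at `w = x - y` we have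
`ŵ = -u`, and the chain rule with the linear map `π_x` yields the formula.
-/

open scoped RealInnerProductSpace

variable {E : Type*} [NormedAddCommGroup E] [InnerProductSpace ℝ E]

/-- The orthogonal projection onto `nᗮ` when `‖n‖ = 1`. -/
noncomputable def projOff (n : E) : E →L[ℝ] E :=
  ContinuousLinearMap.id ℝ E - (innerSL ℝ n).smulRight n

@[simp]
theorem projOff_apply (n z : E) : projOff n z = z - ⟪z, n⟫ • n := by
  simp [projOff, real_inner_comm]

@[simp]
theorem projOff_neg (n : E) : projOff (-n) = projOff n := by
  ext z; simp

theorem hasFDerivAt_norm_of_ne_zero {v : E} (hv : v ≠ 0) :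
    HasFDerivAt (‖·‖) (‖v‖⁻¹ • innerSL ℝ v) v := by
  have hsq : ‖v‖ ^ 2 ≠ 0 := by positivity
  convert (hasStrictFDerivAt_norm_sq v).hasFDerivAt.sqrt hsq using 1
  · simp [Real.sqrt_sq (norm_nonneg _)]
  · ext; simp [Real.sqrt_sq (norm_nonneg _)]; field_simp

theorem hasFDerivAt_inv_norm_smul {v : E} (hv : v ≠ 0) :
    HasFDerivAt (fun w : E => ‖w‖⁻¹ • w) (‖v‖⁻¹ • projOff (‖v‖⁻¹ • v)) v := by
  have hinv := (hasDerivAt_inv (norm_ne_zero_iff.mpr hv)).comp_hasFDerivAt v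
    (hasFDerivAt_norm_of_ne_zero hv)
  refine (hinv.smul (hasFDerivAt_id v)).congr_fderiv (ContinuousLinearMap.ext fun η => ?_)
  simp only [add_apply, smul_apply, projOff_apply, ContinuousLinearMap.smulRight_apply,
    innerSL_apply_apply, real_inner_smul_right, ContinuousLinearMap.id_apply, smul_eq_mul,
    Function.comp_apply, id]
  rw [real_inner_comm v]
  match_scalars <;> ring

theorem stmt_3_general (d : ℕ)
    (x nx : EuclideanSpace ℝ (Fin d))
    (πx : EuclideanSpace ℝ (Fin d) → EuclideanSpace ℝ (Fin d))
    (hπx : ∀ z, πx z = z - ⟪z, nx⟫ • nx)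
    (G : EuclideanSpace ℝ (Fin d) → EuclideanSpace ℝ (Fin d))
    (hG : ∀ z, G z = πx (‖x - z‖⁻¹ • (x - z)))
    (y : EuclideanSpace ℝ (Fin d)) (hy : y ≠ x)
    (u : EuclideanSpace ℝ (Fin d)) (hu : u = ‖x - y‖⁻¹ • (y - x)) :
    ∃ D : EuclideanSpace ℝ (Fin d) →L[ℝ] EuclideanSpace ℝ (Fin d),
      HasFDerivAt G D y ∧
      ∀ η : EuclideanSpace ℝ (Fin d),
        D η = ‖x - y‖⁻¹ • (-(πx η) + ⟪u, η⟫ • πx u) := by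
  have hπ : πx = projOff nx := funext fun z => by rw [hπx, projOff_apply]
  have hG' : G = fun z => projOff nx (‖x - z‖⁻¹ • (x - z)) := funext fun z => by rw [hG, hπ]
  have hchord : HasFDerivAt (fun z => x - z) (-ContinuousLinearMap.id ℝ _) y :=
    (hasFDerivAt_id y).const_sub x
  have hD := (projOff nx).hasFDerivAt.comp y
    ((hasFDerivAt_inv_norm_smul (sub_ne_zero.mpr hy.symm)).comp y hchord)
  refine ⟨_, by rw [hG']; exact hD, fun η => ?_⟩
  have hu' : ‖x - y‖⁻¹ • (x - y) = -u := by rw [hu, ← smul_neg, neg_sub]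
  simp only [ContinuousLinearMap.comp_apply, smul_apply, neg_apply,
    ContinuousLinearMap.id_apply, hu', hπ, projOff_neg, map_neg, projOff_apply u, map_sub,
    map_smul, real_inner_comm u]
  module

/-- Part (c) of the Proposition: derivative in `y` of the projected unit chord
field `G(y) = π_x((x - y)/‖x - y‖)`. -/
theorem stmt_3 (d : ℕ) (hd : 2 ≤ d)
    (x nx : EuclideanSpace ℝ (Fin d)) (hnx : ‖nx‖ = 1)
    (πx : EuclideanSpace ℝ (Fin d) → EuclideanSpace ℝ (Fin d))
    (hπx : ∀ z, πx z = z - ⟪z, nx⟫ • nx)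
    (G : EuclideanSpace ℝ (Fin d) → EuclideanSpace ℝ (Fin d))
    (hG : ∀ z, G z = πx (‖x - z‖⁻¹ • (x - z)))
    (y : EuclideanSpace ℝ (Fin d)) (hy : y ≠ x)
    (u : EuclideanSpace ℝ (Fin d)) (hu : u = ‖x - y‖⁻¹ • (y - x)) :
    ∃ D : EuclideanSpace ℝ (Fin d) →L[ℝ] EuclideanSpace ℝ (Fin d),
      HasFDerivAt G D y ∧
      ∀ η : EuclideanSpace ℝ (Fin d),
        D η = ‖x - y‖⁻¹ • (-(πx η) + ⟪u, η⟫ • πx u) :=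
  stmt_3_general d x nx πx hπx G hG y hy u hu
end

section
/- Let d ≥ 2 and let x, y, ξ be vectors in EuclideanSpace ℝ (Fin d) with ‖x‖ = ‖y‖ = ‖ξ‖ = 1, ⟨x, ξ⟩ = 0, and x ≠ y. Define f : ℝ → ℝ by f(t) = ‖(cos t) • x + (sin t) • ξ − y‖, and set L = ‖x − y‖. Then the second derivative of f at t = 0 equals (⟨x, y⟩ − ⟨ξ, y⟩²/L²)/L, which can be rewritten as (1 − ⟨ξ, y⟩²/L²)/L − L/2. -/
/-!
Along the great circle, `‖cos t • x + sin t • ξ - y‖² = 2 - 2 (⟪x, y⟫ cos t + ⟪ξ, y⟫ sin t)`,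
so `f = √g` for a trigonometric polynomial `g` with `g 0 = L²`, `g' 0 = -2 ⟪ξ, y⟫` and
`g'' 0 = 2 ⟪x, y⟫`; the chain rule `(√g)'' = g'' / (2√g) - g'² / (4 √g³)` gives the Hessian.
The second form follows from `L² = 2 - 2 ⟪x, y⟫`.
-/

open Real Filter Topology
open scoped RealInnerProductSpace

theorem iteratedDeriv_two_sqrt_comp {g g' : ℝ → ℝ} {g'' t₀ : ℝ}
    (hg : ∀ᶠ t in 𝓝 t₀, HasDerivAt g (g' t) t) (hg' : HasDerivAt g' g'' t₀)
    (hpos : 0 < g t₀) :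
    iteratedDeriv 2 (fun t => √(g t)) t₀ =
      g'' / (2 * √(g t₀)) - g' t₀ ^ 2 / (4 * √(g t₀) ^ 3) := by
  have hg₀ : HasDerivAt g (g' t₀) t₀ := hg.self_of_nhds
  have hpos_near : ∀ᶠ t in 𝓝 t₀, 0 < g t :=
    hg₀.continuousAt.eventually (lt_mem_nhds hpos)
  have hderiv : deriv (fun t => √(g t)) =ᶠ[𝓝 t₀] fun t => g' t / (2 * √(g t)) := by
    filter_upwards [hg, hpos_near] with t ht htpos
    exact (ht.sqrt htpos.ne').deriv
  have hsqrt_pos : 0 < √(g t₀) := sqrt_pos.mpr hpos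
  have hquot : HasDerivAt (fun t => g' t / (2 * √(g t))) _ t₀ :=
    hg'.div ((hg₀.sqrt hpos.ne').const_mul 2) (by positivity)
  rw [iteratedDeriv_succ, iteratedDeriv_one, hderiv.deriv_eq, hquot.deriv]
  field_simp
  ring

theorem norm_cos_smul_add_sin_smul_sub_sq {E : Type*} [NormedAddCommGroup E]
    [InnerProductSpace ℝ E] {x ξ : E} (y : E) (hx : ‖x‖ = 1) (hξ : ‖ξ‖ = 1)
    (hxξ : ⟪x, ξ⟫ = 0) (t : ℝ) :
    ‖cos t • x + sin t • ξ - y‖ ^ 2 = 1 + ‖y‖ ^ 2 - 2 * (⟪x, y⟫ * cos t + ⟪ξ, y⟫ * sin t) := by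
  rw [norm_sub_sq_real, norm_add_sq_real, norm_smul, norm_smul, real_inner_smul_left,
    real_inner_smul_right, inner_add_left, real_inner_smul_left, real_inner_smul_left, hx, hξ,
    hxξ]
  simp only [norm_eq_abs, mul_one, mul_zero, sq_abs]
  linear_combination sin_sq_add_cos_sq t

theorem iteratedDeriv_two_sqrt_sub_cos_sin_zero {c a b : ℝ} (h : 0 < c - 2 * a) :
    iteratedDeriv 2 (fun t => √(c - 2 * (a * cos t + b * sin t))) 0 =
      (a - b ^ 2 / (c - 2 * a)) / √(c - 2 * a) := by
  have hg : ∀ t, HasDerivAt (fun t => c - 2 * (a * cos t + b * sin t))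
      (2 * (a * sin t - b * cos t)) t := fun t =>
    (((hasDerivAt_cos t).const_mul a).add ((hasDerivAt_sin t).const_mul b)).const_mul 2
      |>.const_sub c |>.congr_deriv (by ring)
  have hg' : HasDerivAt (fun t => 2 * (a * sin t - b * cos t)) (2 * a) 0 :=
    (((hasDerivAt_sin 0).const_mul a).sub ((hasDerivAt_cos 0).const_mul b)).const_mul 2
      |>.congr_deriv (by simp)
  have hpos : 0 < c - 2 * (a * cos 0 + b * sin 0) := by simpa using h
  rw [iteratedDeriv_two_sqrt_comp (Eventually.of_forall hg) hg' hpos]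
  simp only [cos_zero, sin_zero, mul_one, mul_zero, add_zero, zero_sub]
  have hsqrt_pos : 0 < √(c - 2 * a) := sqrt_pos.mpr h
  have hsqrt_sq : √(c - 2 * a) ^ 2 = c - 2 * a := sq_sqrt h.le
  generalize √(c - 2 * a) = s at hsqrt_pos hsqrt_sq ⊢
  rw [← hsqrt_sq]
  field_simp
  ring

theorem stmt_6_general (d : ℕ)
    (x y ξ : EuclideanSpace ℝ (Fin d))
    (hx : ‖x‖ = 1) (hy : ‖y‖ = 1) (hξ : ‖ξ‖ = 1)
    (hxξ : ⟪x, ξ⟫ = 0) (hxy : x ≠ y)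
    (f : ℝ → ℝ)
    (hf : ∀ t, f t = ‖(Real.cos t) • x + (Real.sin t) • ξ - y‖)
    (L : ℝ) (hL : L = ‖x - y‖) :
    iteratedDeriv 2 f 0 = (⟪x, y⟫ - ⟪ξ, y⟫ ^ 2 / L ^ 2) / L ∧
    (⟪x, y⟫ - ⟪ξ, y⟫ ^ 2 / L ^ 2) / L = (1 - ⟪ξ, y⟫ ^ 2 / L ^ 2) / L - L / 2 := by
  have hL_pos : 0 < L := hL ▸ norm_sub_pos_iff.mpr hxy
  have hL_sq : L ^ 2 = 2 - 2 * ⟪x, y⟫ := by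
    rw [hL, norm_sub_sq_real, hx, hy]
    ring
  have hf_sqrt : f = fun t => √(2 - 2 * (⟪x, y⟫ * cos t + ⟪ξ, y⟫ * sin t)) := by
    funext t
    rw [hf, ← sqrt_sq (norm_nonneg _), norm_cos_smul_add_sin_smul_sub_sq y hx hξ hxξ, hy]
    norm_num
  refine ⟨?_, ?_⟩
  · rw [hf_sqrt, iteratedDeriv_two_sqrt_sub_cos_sin_zero (hL_sq ▸ pow_pos hL_pos 2), ← hL_sq,
      sqrt_sq hL_pos.le]
  · rw [show ⟪x, y⟫ = 1 - L ^ 2 / 2 by linarith]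
    field_simp
    ring

/-- Hessian of the distance to `y` on the unit sphere, computed as the second
derivative along a unit-speed great circle through `x` with velocity `ξ`. -/
theorem stmt_6 (d : ℕ) (hd : 2 ≤ d)
    (x y ξ : EuclideanSpace ℝ (Fin d))
    (hx : ‖x‖ = 1) (hy : ‖y‖ = 1) (hξ : ‖ξ‖ = 1)
    (hxξ : ⟪x, ξ⟫ = 0) (hxy : x ≠ y)
    (f : ℝ → ℝ)
    (hf : ∀ t, f t = ‖(Real.cos t) • x + (Real.sin t) • ξ - y‖)
    (L : ℝ) (hL : L = ‖x - y‖) :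
    iteratedDeriv 2 f 0 = (⟪x, y⟫ - ⟪ξ, y⟫ ^ 2 / L ^ 2) / L ∧
    (⟪x, y⟫ - ⟪ξ, y⟫ ^ 2 / L ^ 2) / L = (1 - ⟪ξ, y⟫ ^ 2 / L ^ 2) / L - L / 2 :=
  stmt_6_general d x y ξ hx hy hξ hxξ hxy f hf L hL
end

section
/- For every real α with 0 < α < π/2 there exists n ≥ 1 and a vector x ∈ ℝⁿ such that xᵀ A x > 0, where A is the n × n symmetric tridiagonal matrix with diagonal entries a = cos(2α)/sin(α), entries b = −1/(2 sin α) on the first super- and sub-diagonal, and zeros elsewhere. In other words, for every α ∈ (0, π/2), the matrix A fails to be negative semidefinite once its size n is large enough. -/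
open scoped Matrix

private lemma sum_indicator_aux (n : ℕ) (c : ℤ) (y : ℤ → ℝ)
    (hc : ¬(0 ≤ c ∧ c < n) → y c = 0) :
    ∑ j : Fin n, (if (j : ℤ) = c then y (j : ℤ) else 0) = y c := by
  by_cases h : 0 ≤ c ∧ c < n
  · have hlt : c.toNat < n := by omega
    have : ∀ j : Fin n, ((j : ℤ) = c) = (j = ⟨c.toNat, hlt⟩) := by
      intro j
      simp only [Fin.ext_iff, eq_iff_iff]
      omega
    simp only [this]
    rw [Finset.sum_ite_eq' Finset.univ ⟨c.toNat, hlt⟩ (fun j : Fin n => y (j : ℤ))]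
    simp only [Finset.mem_univ, if_true]
    congr 1
    omega
  · rw [hc h]
    apply Finset.sum_eq_zero
    intro j _
    rw [if_neg]
    have := j.isLt
    omega

/-- For the billiard in the standard sphere with reflection angle `α < π/2`, the
second variation with respect to transversal perturbations, the tridiagonal
Toeplitz matrix with diagonal `cos 2α / sin α` and off-diagonal `-1/(2 sin α)`,
fails to be negative semidefinite for `n` large enough. -/
theorem stmt_8 (α : ℝ) (hα : 0 < α) (hα' : α < Real.pi / 2) :
    ∃ n : ℕ, 1 ≤ n ∧ ∃ x : Fin n → ℝ,
      0 < x ⬝ᵥ (Matrix.of fun i j : Fin n =>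
        if i = j then Real.cos (2 * α) / Real.sin α
        else if ((i : ℤ) - (j : ℤ)).natAbs = 1 then -1 / (2 * Real.sin α)
        else 0).mulVec x := by
  have hπ := Real.pi_pos
  have hsin : 0 < Real.sin α :=
    Real.sin_pos_of_pos_of_lt_pi hα (by linarith)
  have h2α : 2 * α < Real.pi := by linarith
  have hden : 0 < Real.pi - 2 * α := by linarith
  obtain ⟨n, hn⟩ := exists_nat_gt (Real.pi / (Real.pi - 2 * α))
  have hn1 : (1 : ℝ) ≤ n := by
    have : (1 : ℝ) ≤ Real.pi / (Real.pi - 2 * α) := by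
      rw [le_div_iff₀ hden]; linarith
    linarith
  have hnn : 1 ≤ n := by exact_mod_cast hn1
  set φ : ℝ := Real.pi / (n + 1) with hφdef
  have hnp : (0 : ℝ) < (n : ℝ) + 1 := by positivity
  have hφpos : 0 < φ := by positivity
  have hφlt : φ < Real.pi - 2 * α := by
    rw [hφdef, div_lt_iff₀ hnp]
    have h1 : Real.pi / (Real.pi - 2 * α) < (n : ℝ) + 1 := by linarith
    rw [div_lt_iff₀ hden] at h1
    linarith
  have hφpi : φ < Real.pi := by linarith
  -- eigenvalue
  set lam : ℝ := (Real.cos (2 * α) + Real.cos φ) / Real.sin α with hlamdef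
  have hcos : Real.cos (Real.pi - 2 * α) < Real.cos φ :=
    Real.cos_lt_cos_of_nonneg_of_le_pi (le_of_lt hφpos) (by linarith) hφlt
  rw [Real.cos_pi_sub] at hcos
  have hlam : 0 < lam := by
    apply div_pos _ hsin
    linarith
  -- the eigenvector, extended to ℤ
  set y : ℤ → ℝ := fun m => (-1 : ℝ) ^ m * Real.sin (((m : ℝ) + 1) * φ) with hydef
  set a : ℝ := Real.cos (2 * α) / Real.sin α with hadef
  set b : ℝ := -1 / (2 * Real.sin α) with hbdef
  -- key three-term identity, valid for every integer m
  have key : ∀ m : ℤ, b * y (m - 1) + a * y m + b * y (m + 1) = lam * y m := by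
    intro m
    have hne : (-1 : ℝ) ≠ 0 := by norm_num
    have e1 : ((-1 : ℝ)) ^ (m - 1) = (-1 : ℝ) ^ m * (-1) := by
      rw [zpow_sub_one₀ hne]; norm_num
    have e2 : ((-1 : ℝ)) ^ (m + 1) = (-1 : ℝ) ^ m * (-1) := by
      rw [zpow_add_one₀ hne]
    simp only [hydef]
    push_cast
    have s1 : ((m : ℝ) - 1 + 1) * φ = (((m : ℝ) + 1) * φ) - φ := by ring
    have s2 : ((m : ℝ) + 1 + 1) * φ = (((m : ℝ) + 1) * φ) + φ := by ring
    rw [e1, e2, s1, s2, Real.sin_sub, Real.sin_add]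
    rw [hadef, hbdef, hlamdef]
    field_simp
    ring
  have hsinnpi : Real.sin (((n : ℝ) + 1) * φ) = 0 := by
    rw [hφdef, mul_div_cancel₀ _ (ne_of_gt hnp), Real.sin_pi]
  have hym1 : y (-1) = 0 := by
    simp only [hydef]
    norm_num
  have hyn : y (n : ℤ) = 0 := by
    simp only [hydef]
    push_cast
    rw [hsinnpi, mul_zero]
  refine ⟨n, hnn, fun j => y (j : ℤ), ?_⟩
  set x : Fin n → ℝ := fun j => y (j : ℤ) with hxdef
  set A : Matrix (Fin n) (Fin n) ℝ := (Matrix.of fun i j : Fin n =>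
        if i = j then Real.cos (2 * α) / Real.sin α
        else if ((i : ℤ) - (j : ℤ)).natAbs = 1 then -1 / (2 * Real.sin α)
        else 0) with hAdef
  -- mulVec computation: x is an eigenvector with eigenvalue lam
  have hmul : ∀ i : Fin n, A.mulVec x i = lam * x i := by
    intro i
    have hi := i.isLt
    have expand : A.mulVec x i = ∑ j : Fin n, A i j * x j := by
      simp [Matrix.mulVec, dotProduct]
    rw [expand]
    have split : ∀ j : Fin n, A i j * x j =
        (if (j : ℤ) = (i : ℤ) - 1 then b * y (j : ℤ) else 0)
        + (if (j : ℤ) = (i : ℤ) then a * y (j : ℤ) else 0)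
        + (if (j : ℤ) = (i : ℤ) + 1 then b * y (j : ℤ) else 0) := by
      intro j
      simp only [hAdef, Matrix.of_apply, hxdef, ← hadef, ← hbdef]
      by_cases h2 : i = j
      · subst h2
        rw [if_pos rfl, if_neg (by omega), if_pos rfl, if_neg (by omega)]
        ring
      · have hne' : (i : ℤ) ≠ (j : ℤ) := by
          intro hh
          exact h2 (Fin.ext (by omega))
        rw [if_neg h2]
        by_cases h1 : (j : ℤ) = (i : ℤ) - 1
        · rw [if_pos (by omega), if_pos h1, if_neg (by omega), if_neg (by omega)]
          ring
        · by_cases h3 : (j : ℤ) = (i : ℤ) + 1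
          · rw [if_pos (by omega), if_neg h1, if_neg (by omega), if_pos h3]
            ring
          · rw [if_neg (by omega), if_neg h1, if_neg (by omega), if_neg h3]
            ring
    rw [Finset.sum_congr rfl (fun j _ => split j), Finset.sum_add_distrib,
      Finset.sum_add_distrib]
    rw [sum_indicator_aux n ((i : ℤ) - 1) (fun m => b * y m) (by
      intro h
      have hie : (i : ℤ) - 1 = -1 := by omega
      simp only [hie, hym1, mul_zero])]
    rw [sum_indicator_aux n ((i : ℤ)) (fun m => a * y m) (by
      intro h
      exact absurd ⟨by omega, by omega⟩ h)]
    rw [sum_indicator_aux n ((i : ℤ) + 1) (fun m => b * y m) (by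
      intro h
      have hie : (i : ℤ) + 1 = (n : ℤ) := by omega
      simp only [hie, hyn, mul_zero])]
    have := key (i : ℤ)
    simp only [hxdef]
    linarith [key (i : ℤ)]
  -- conclude positivity of the quadratic form
  have hdot : x ⬝ᵥ A.mulVec x = lam * ∑ i : Fin n, x i ^ 2 := by
    simp only [dotProduct]
    rw [Finset.mul_sum]
    apply Finset.sum_congr rfl
    intro i _
    rw [hmul i]
    ring
  rw [hdot]
  apply mul_pos hlam
  apply Finset.sum_pos'
  · intro i _
    positivity
  · refine ⟨⟨0, by omega⟩, Finset.mem_univ _, ?_⟩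
    have hx0 : x ⟨0, by omega⟩ = Real.sin φ := by
      simp only [hxdef, hydef]
      norm_num
    rw [hx0]
    have := Real.sin_pos_of_pos_of_lt_pi hφpos hφpi
    positivity
end

section
/- Let n ≥ 2 and let A be an n × n real symmetric matrix that is tridiagonal (A i j = 0 whenever |i − j| ≥ 2) and has all entries on the first super-diagonal nonzero (A i (i+1) ≠ 0 for all i). If A is negative semidefinite, then for any integers 0 ≤ l ≤ r ≤ n − 1 with r − l + 1 < n, the principal submatrix of A on the contiguous index block {l, l+1, …, r} is negative definite. -/
open scoped Matrix

/-! If the block form took a nonnegative value at some `y ≠ 0`, the extension `x` of `y` by zero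
would satisfy `x ⬝ᵥ A *ᵥ x = 0`, hence `A *ᵥ x = 0` by semidefiniteness. As the block is proper,
`x` vanishes at an end of `Fin n`; then the twist condition lets each row of `A *ᵥ x = 0` solve
for the next coordinate, so `x = 0`, and so `y = 0`. -/

open Function

namespace Matrix

variable {n : ℕ} {R : Type*}

def IsTridiagonal [Zero R] (A : Matrix (Fin n) (Fin n) R) : Prop :=
  ∀ i j : Fin n, 2 ≤ ((i : ℤ) - (j : ℤ)).natAbs → A i j = 0

namespace IsTridiagonal

variable [Semiring R] {A : Matrix (Fin n) (Fin n) R}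

theorem submatrix_rev (hA : A.IsTridiagonal) : (A.submatrix Fin.rev Fin.rev).IsTridiagonal :=
  fun i j hij ↦ hA (Fin.rev i) (Fin.rev j) (by rw [Fin.val_rev, Fin.val_rev]; omega)

theorem mulVec_apply_eq_of_forall_le (hA : A.IsTridiagonal) {x : Fin n → R} {p q : Fin n}
    (hq : (q : ℕ) = p + 1) (hx : ∀ j : Fin n, (j : ℕ) ≤ p → x j = 0) :
    (A *ᵥ x) p = A p q * x q := by
  rw [mulVec, dotProduct]
  refine Finset.sum_eq_single q (fun j _ hjq ↦ ?_) fun hq ↦ absurd (Finset.mem_univ q) hq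
  rcases le_or_gt (j : ℕ) p with hjp | hpj
  · rw [hx j hjp, mul_zero]
  · have : (q : ℕ) ≠ j := fun h ↦ hjq (Fin.ext h.symm)
    rw [hA p j (by omega), zero_mul]

variable [NoZeroDivisors R]

theorem eq_zero_of_mulVec_eq_zero_of_apply_first (hA : A.IsTridiagonal)
    (hsup : ∀ i j : Fin n, (j : ℕ) = i + 1 → A i j ≠ 0) {x : Fin n → R} (hx : A *ᵥ x = 0)
    (hn : 0 < n) (h₀ : x ⟨0, hn⟩ = 0) : x = 0 := by
  suffices h : ∀ k, ∀ i : Fin n, (i : ℕ) ≤ k → x i = 0 from funext fun i ↦ h i i le_rfl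
  intro k
  induction k with
  | zero =>
    intro i hi
    obtain rfl : i = ⟨0, hn⟩ := Fin.ext (Nat.le_zero.mp hi)
    exact h₀
  | succ k ih =>
    intro i hi
    rcases Nat.lt_or_eq_of_le hi with hik | hik
    · exact ih i (by omega)
    have hrow := congrFun hx ⟨k, by omega⟩
    rw [hA.mulVec_apply_eq_of_forall_le hik ih] at hrow
    exact (mul_eq_zero.mp hrow).resolve_left (hsup _ _ hik)

theorem eq_zero_of_mulVec_eq_zero_of_apply_last (hA : A.IsTridiagonal)
    (hsub : ∀ i j : Fin n, (i : ℕ) = j + 1 → A i j ≠ 0) {x : Fin n → R} (hx : A *ᵥ x = 0)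
    (hn : 0 < n) (hlast : x ⟨n - 1, by omega⟩ = 0) : x = 0 := by
  have hrev : A.submatrix Fin.revPerm Fin.revPerm *ᵥ (x ∘ Fin.revPerm) = 0 := by
    rw [submatrix_mulVec_equiv, comp_assoc, Equiv.self_comp_symm, comp_id, hx]
    rfl
  have := hA.submatrix_rev.eq_zero_of_mulVec_eq_zero_of_apply_first
    (fun i j hij ↦ hsub _ _ (by simp only [Fin.val_rev]; omega)) hrev hn hlast
  exact funext fun i ↦ by simpa using congrFun this (Fin.rev i)

end IsTridiagonal

theorem extend_dotProduct_mulVec_extend {m ι : Type*} [Fintype m] [Fintype ι] [CommSemiring R]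
    {e : m → ι} (he : Injective e) (A : Matrix ι ι R) (y : m → R) :
    extend e y 0 ⬝ᵥ A *ᵥ extend e y 0 = ∑ i, ∑ j, y i * A (e i) (e j) * y j := by
  have hout : ∀ k ∉ Set.range e, extend e y 0 k = 0 := fun k hk ↦
    extend_apply' _ _ _ (by simpa using hk)
  refine (Fintype.sum_of_injective e he _ _ (fun k hk ↦ by simp [hout k hk]) fun i ↦ ?_).symm
  rw [he.extend_apply, mulVec, dotProduct, Finset.mul_sum]
  refine Fintype.sum_of_injective e he _ _ (fun k hk ↦ by simp [hout k hk]) fun j ↦ ?_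
  rw [he.extend_apply, mul_assoc]

theorem mulVec_eq_zero_of_dotProduct_mulVec_eq_zero {ι : Type*} [Fintype ι]
    {A : Matrix ι ι ℝ} (hA : A.IsSymm) (hneg : ∀ x, x ⬝ᵥ A *ᵥ x ≤ 0) {x : ι → ℝ}
    (hx : x ⬝ᵥ A *ᵥ x = 0) : A *ᵥ x = 0 := by
  have hpsd : (-A).PosSemidef := posSemidef_iff_dotProduct_mulVec.mpr
    ⟨(isHermitian_iff_isSymm.mpr hA).neg, fun v ↦ by simpa [neg_mulVec] using hneg v⟩
  simpa [neg_mulVec] using (hpsd.dotProduct_mulVec_zero_iff x).mp (by simpa [neg_mulVec] using hx)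

end Matrix

open Matrix

/-- If a symmetric tridiagonal matrix with nonzero super-diagonal entries (the
scalar twist condition) is negative semidefinite, then every proper principal
submatrix on a contiguous index block is negative definite. -/
theorem stmt_12 (n : ℕ) (A : Matrix (Fin n) (Fin n) ℝ)
    (hsymm : A.IsSymm)
    (htri : ∀ i j : Fin n, 2 ≤ ((i : ℤ) - (j : ℤ)).natAbs → A i j = 0)
    (hsup : ∀ i j : Fin n, (j : ℕ) = (i : ℕ) + 1 → A i j ≠ 0)
    (hneg : ∀ x : Fin n → ℝ, x ⬝ᵥ A.mulVec x ≤ 0)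
    (l r : ℕ) (hlr : l ≤ r) (hr : r ≤ n - 1) (hsize : r - l + 1 < n) :
    ∀ y : Fin (r - l + 1) → ℝ, y ≠ 0 →
      ∑ i : Fin (r - l + 1), ∑ j : Fin (r - l + 1),
        y i * A ⟨l + (i : ℕ), by have := i.2; omega⟩ ⟨l + (j : ℕ), by have := j.2; omega⟩ * y j
        < 0 := by
  intro y hy
  let e : Fin (r - l + 1) → Fin n := fun i ↦ ⟨l + i, by omega⟩
  have he : Injective e := fun a b hab ↦ Fin.ext (by simpa [e] using hab)
  set x := extend e y 0
  have hout : ∀ k : Fin n, ((k : ℕ) < l ∨ r < k) → x k = 0 := fun k hk ↦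
    extend_apply' _ _ _ fun ⟨i, hi⟩ ↦ by have := i.2; simp only [e, ← hi] at hk; omega
  by_contra! hQ
  have hker : A *ᵥ x = 0 := mulVec_eq_zero_of_dotProduct_mulVec_eq_zero hsymm hneg
    (le_antisymm (hneg x) (by rwa [extend_dotProduct_mulVec_extend he]))
  have hx : x = 0 := by
    rcases (by omega : 0 < l ∨ r + 1 < n) with hl | hr
    · exact IsTridiagonal.eq_zero_of_mulVec_eq_zero_of_apply_first htri hsup hker (by omega)
        (hout ⟨0, _⟩ (.inl hl))
    · exact IsTridiagonal.eq_zero_of_mulVec_eq_zero_of_apply_last htri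
        (fun i j hij ↦ hsymm.apply i j ▸ hsup j i hij) hker (by omega)
        (hout _ (.inr (show r < n - 1 by omega)))
  exact hy (funext fun i ↦ by simpa [x, he.extend_apply] using congrFun hx (e i))
end
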